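/- Let φ be an indecomposable 𝔖∞-central state on G = Γ≀𝔖∞ with GNS triple (π, H, ξ), and let O_j, 𝔄_j and φ_{j,k} be as defined. Let m ≥ 2, let k₁, ..., k_m be distinct elements of ℕ, and let s_p ∈ 𝔖∞ be the cycle defined by s_p(k_{l+1}) = k_l for 1 ≤ l ≤ m−1, s_p(k₁) = k_m, and s_p(i) = i for i ∉ {k₁,...,k_m}. If U_{k_i} ∈ 𝔄_{k_i} for i = 1, ..., m, then ⟨π(s_p)·U_{k₁}U_{k₂}⋯U_{k_m} ξ, ξ⟩ = ⟨φ_{k_m,k₁}(U_{k₁})·O_{k_m}·φ_{k_m,k₂}(U_{k₂})·O_{k_m}⋯φ_{k_m,k_{m−1}}(U_{k_{m−1}})·O_{k_m}·U_{k_m} ξ, ξ⟩. -/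

import Mathlib

open scoped Classical ComplexOrder
open Filter Topology

noncomputable section

namespace DN

local notation "⟪" x ", " y "⟫" => @inner ℂ _ _ x y

/-- The group `𝔖∞` of finitely supported permutations of `ℕ`. -/
def SInf : Subgroup (Equiv.Perm ℕ) where
  carrier := {s | {i | s i ≠ i}.Finite}
  one_mem' := by simp
  mul_mem' := by
    intro s t hs ht
    refine Set.Finite.subset (hs.union ht) fun i hi => ?_
    simp only [Set.mem_setOf_eq, Set.mem_union, Equiv.Perm.mul_apply] at hi ⊢
    by_contra h
    push_neg at h
    rw [h.2, h.1] at hi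
    exact hi rfl
  inv_mem' := by
    intro s hs
    refine Set.Finite.subset hs fun i hi => ?_
    simp only [Set.mem_setOf_eq] at hi ⊢
    intro h
    exact hi (Equiv.Perm.inv_eq_iff_eq.mpr h.symm)

theorem mem_SInf (s : Equiv.Perm ℕ) : s ∈ SInf ↔ {i | s i ≠ i}.Finite := Iff.rfl

/-- The group `Γ^∞_e` of finitely supported sequences in `Γ`. -/
def GammaE (Γ : Type*) [Group Γ] : Subgroup (ℕ → Γ) where
  carrier := {γ | {i | γ i ≠ 1}.Finite}
  one_mem' := by simp
  mul_mem' := by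
    intro f g hf hg
    refine Set.Finite.subset (hf.union hg) fun i hi => ?_
    simp only [Set.mem_setOf_eq, Set.mem_union, Pi.mul_apply] at hi ⊢
    by_contra h
    push_neg at h
    rw [h.1, h.2] at hi
    exact hi (one_mul 1)
  inv_mem' := by
    intro f hf
    refine Set.Finite.subset hf fun i hi => ?_
    simp only [Set.mem_setOf_eq, Pi.inv_apply, ne_eq, inv_eq_one] at hi ⊢
    exact hi

theorem mem_GammaE {Γ : Type*} [Group Γ] (γ : ℕ → Γ) :
    γ ∈ GammaE Γ ↔ {i | γ i ≠ 1}.Finite := Iff.rfl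

/-- The permutation action of `Equiv.Perm ℕ` on `ℕ → Γ`. -/
def permMulAut (Γ : Type*) [Group Γ] (s : Equiv.Perm ℕ) : MulAut (ℕ → Γ) where
  toFun γ := γ ∘ s.symm
  invFun γ := γ ∘ s
  left_inv γ := by funext i; simp [Function.comp]
  right_inv γ := by funext i; simp [Function.comp]
  map_mul' γ δ := rfl

def permAction (Γ : Type*) [Group Γ] : Equiv.Perm ℕ →* MulAut (ℕ → Γ) where
  toFun := permMulAut Γ
  map_one' := by ext γ i; rfl
  map_mul' s t := by ext γ i; rfl

/-- The (big) wreath product `(ℕ → Γ) ⋊ Perm ℕ`. -/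
abbrev W (Γ : Type*) [Group Γ] := (ℕ → Γ) ⋊[permAction Γ] Equiv.Perm ℕ

/-- The wreath product `G = Γ ≀ 𝔖∞`, as the subgroup of `W Γ` of finitely
supported elements. -/
def WG (Γ : Type*) [Group Γ] : Subgroup (W Γ) where
  carrier := {g | {i | g.right i ≠ i}.Finite ∧ {i | g.left i ≠ 1}.Finite}
  one_mem' := by
    constructor
    · convert Set.finite_empty using 1
      ext i; simp
    · convert Set.finite_empty using 1
      ext i; simp
  mul_mem' := by
    rintro a b ⟨ha1, ha2⟩ ⟨hb1, hb2⟩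
    constructor
    · refine Set.Finite.subset (ha1.union hb1) fun i hi => ?_
      simp only [Set.mem_setOf_eq, Set.mem_union, SemidirectProduct.mul_right,
        Equiv.Perm.mul_apply] at hi ⊢
      by_contra h
      push_neg at h
      rw [h.2, h.1] at hi
      exact hi rfl
    · refine Set.Finite.subset (ha2.union (hb2.image a.right)) fun i hi => ?_
      simp only [Set.mem_setOf_eq, SemidirectProduct.mul_left, Pi.mul_apply] at hi
      by_contra h
      simp only [Set.mem_union, Set.mem_setOf_eq, Set.mem_image, not_or, not_exists,
        not_and, not_not] at h
      obtain ⟨h1, h2⟩ := h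
      apply hi
      have hb : b.left (a.right⁻¹ i) = 1 := by
        by_contra hc
        exact h2 (a.right⁻¹ i) hc (by simp)
      have hrfl : (permAction Γ a.right b.left) i = b.left (a.right⁻¹ i) := rfl
      rw [h1, one_mul, hrfl, hb]
  inv_mem' := by
    rintro a ⟨ha1, ha2⟩
    constructor
    · refine Set.Finite.subset ha1 fun i hi => ?_
      simp only [Set.mem_setOf_eq, SemidirectProduct.inv_right] at hi ⊢
      intro h
      exact hi (Equiv.Perm.inv_eq_iff_eq.mpr h.symm)
    · refine Set.Finite.subset (Set.Finite.preimage (a.right.injective.injOn) ha2)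
        fun i hi => ?_
      simp only [Set.mem_setOf_eq] at hi
      simp only [Set.mem_preimage, Set.mem_setOf_eq]
      intro h
      apply hi
      have hrfl : (a⁻¹).left i = (a.left (a.right i))⁻¹ := rfl
      rw [hrfl, h, inv_one]

theorem mem_WG {Γ : Type*} [Group Γ] (g : W Γ) :
    g ∈ WG Γ ↔ {i | g.right i ≠ i}.Finite ∧ {i | g.left i ≠ 1}.Finite := Iff.rfl

/-- The canonical copy of `𝔖∞` inside `Γ ≀ 𝔖∞`. -/
def permW {Γ : Type*} [Group Γ] (s : SInf) : WG Γ :=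
  ⟨SemidirectProduct.inr s.1, by
    rw [mem_WG]
    constructor
    · have h : (SemidirectProduct.inr s.1 : W Γ).right = s.1 := SemidirectProduct.right_inr _
      rw [h]
      exact s.2
    · convert Set.finite_empty using 1
      ext i; simp⟩

/-- The canonical copy of `Γ^∞_e` inside `Γ ≀ 𝔖∞`. -/
def seqW {Γ : Type*} [Group Γ] (γ : GammaE Γ) : WG Γ :=
  ⟨SemidirectProduct.inl γ.1, by
    rw [mem_WG]
    constructor
    · convert Set.finite_empty using 1
      ext i; simp
    · have h : (SemidirectProduct.inl γ.1 : W Γ).left = γ.1 := SemidirectProduct.left_inl _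
      rw [h]
      exact γ.2⟩

/-- The support of an element of `Γ ≀ 𝔖∞`. -/
def supp {Γ : Type*} [Group Γ] (g : WG Γ) : Set ℕ :=
  {i | (g : W Γ).right i ≠ i ∨ (g : W Γ).left i ≠ 1}

/-- Positive definiteness of a function on a group. -/
def IsPosDef {G : Type*} [Group G] (φ : G → ℂ) : Prop :=
  ∀ (m : ℕ) (g : Fin m → G) (c : Fin m → ℂ),
    0 ≤ ∑ i, ∑ j, c i * (starRingEnd ℂ) (c j) * φ ((g j)⁻¹ * g i)

/-- A state on a group: normalized positive definite function. -/
def IsState {G : Type*} [Group G] (φ : G → ℂ) : Prop := φ 1 = 1 ∧ IsPosDef φ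

/-- `𝔖∞`-centrality of a function on `Γ ≀ 𝔖∞`. -/
def IsSCentral {Γ : Type*} [Group Γ] (φ : WG Γ → ℂ) : Prop :=
  ∀ (s : SInf) (g : WG Γ), φ (permW s * g * (permW s)⁻¹) = φ g

/-- The commutant of a set of bounded operators. -/
def commutant {H : Type*} [NormedAddCommGroup H] [InnerProductSpace ℂ H]
    (S : Set (H →L[ℂ] H)) : Set (H →L[ℂ] H) := {T | ∀ A ∈ S, T * A = A * T}

variable {Γ : Type*} [Group Γ]
variable {H : Type*} [NormedAddCommGroup H] [InnerProductSpace ℂ H] [CompleteSpace H]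

/-- The image set `π(G)` of a representation. -/
def repSet (π : WG Γ →* (H →L[ℂ] H)) : Set (H →L[ℂ] H) := Set.range fun g : WG Γ => π g

/-- The von Neumann algebra `π(G)''` (double commutant). -/
def vN (π : WG Γ →* (H →L[ℂ] H)) : Set (H →L[ℂ] H) := commutant (commutant (repSet π))

/-- The representation is factorial: the center `π(G)' ∩ π(G)''` consists of scalars. -/
def IsFactorial (π : WG Γ →* (H →L[ℂ] H)) : Prop :=
  ∀ T ∈ commutant (repSet π) ∩ vN π, ∃ c : ℂ, T = c • (1 : H →L[ℂ] H)

/-- `(π, H, ξ)` is a GNS triple for `φ`. -/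
structure IsGNS (φ : WG Γ → ℂ) (π : WG Γ →* (H →L[ℂ] H)) (ξ : H) : Prop where
  unitary : ∀ g, π g ∈ unitary (H →L[ℂ] H)
  norm_one : ‖ξ‖ = 1
  cyclic : Dense ((Submodule.span ℂ (Set.range fun g : WG Γ => π g ξ) : Submodule ℂ H) : Set H)
  inner_eq : ∀ g, φ g = ⟪ξ, π g ξ⟫

theorem swap_mem_SInf (a b : ℕ) : Equiv.swap a b ∈ SInf := by
  rw [mem_SInf]
  refine Set.Finite.subset ((Set.finite_singleton a).insert b) fun i hi => ?_
  simp only [Set.mem_setOf_eq] at hi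
  simp only [Set.mem_insert_iff, Set.mem_singleton_iff]
  by_contra h
  push_neg at h
  exact hi (Equiv.swap_apply_of_ne_of_ne h.2 h.1)

/-- The transposition `(a b)` as an element of `Γ ≀ 𝔖∞`. -/
def swapW {Γ : Type*} [Group Γ] (a b : ℕ) : WG Γ := permW ⟨Equiv.swap a b, swap_mem_SInf a b⟩

def omegaFun (n i : ℕ) : ℕ := if i < n then i + n else if i < 2 * n then i - n else i

theorem omegaFun_invol (n i : ℕ) : omegaFun n (omegaFun n i) = i := by
  unfold omegaFun
  split_ifs <;> first | contradiction | omega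

/-- Olshanski's permutation `ω_n`. -/
def omegaPerm (n : ℕ) : Equiv.Perm ℕ :=
  ⟨omegaFun n, omegaFun n, omegaFun_invol n, omegaFun_invol n⟩

theorem omegaPerm_mem (n : ℕ) : omegaPerm n ∈ SInf := by
  rw [mem_SInf]
  refine Set.Finite.subset (Set.finite_Iio (2 * n)) fun i hi => ?_
  simp only [Set.mem_setOf_eq] at hi
  simp only [Set.mem_Iio]
  by_contra h
  push_neg at h
  apply hi
  show omegaFun n i = i
  unfold omegaFun
  split_ifs <;> first | contradiction | omega

/-- `ω_n` as an element of `Γ ≀ 𝔖∞`. -/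
def omegaW {Γ : Type*} [Group Γ] (n : ℕ) : WG Γ := permW ⟨omegaPerm n, omegaPerm_mem n⟩

def sigmaFun (n i : ℕ) : ℕ := if i + 1 < n then i + 1 else if i + 1 = n then 0 else i

def sigmaInvFun (n i : ℕ) : ℕ := if i < n then (if i = 0 then n - 1 else i - 1) else i

theorem sigma_left_inv (n i : ℕ) : sigmaInvFun n (sigmaFun n i) = i := by
  unfold sigmaFun sigmaInvFun
  split_ifs <;> first | contradiction | omega

theorem sigma_right_inv (n i : ℕ) : sigmaFun n (sigmaInvFun n i) = i := by
  unfold sigmaFun sigmaInvFun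
  split_ifs <;> first | contradiction | omega

/-- The cycle `σ_n = (0 1 2 ... n-1)`. -/
def sigmaPerm (n : ℕ) : Equiv.Perm ℕ :=
  ⟨sigmaFun n, sigmaInvFun n, sigma_left_inv n, sigma_right_inv n⟩

theorem sigmaPerm_mem (n : ℕ) : sigmaPerm n ∈ SInf := by
  rw [mem_SInf]
  refine Set.Finite.subset (Set.finite_Iio n) fun i hi => ?_
  simp only [Set.mem_setOf_eq] at hi
  simp only [Set.mem_Iio]
  by_contra h
  push_neg at h
  apply hi
  show sigmaFun n i = i
  unfold sigmaFun
  split_ifs <;> first | contradiction | omega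

/-- The cycle of `s` through the point `i` (the paper's `s_p` for the orbit `p` of `i`). -/
def cycleAt (s : Equiv.Perm ℕ) (i : ℕ) : Equiv.Perm ℕ where
  toFun j := if s.SameCycle i j then s j else j
  invFun j := if s.SameCycle i j then s⁻¹ j else j
  left_inv j := by
    by_cases h : s.SameCycle i j
    · have h2 : s.SameCycle i (s j) := Equiv.Perm.sameCycle_apply_right.mpr h
      simp [h, h2]
    · simp [h]
  right_inv j := by
    by_cases h : s.SameCycle i j
    · have h2 : s.SameCycle i (s⁻¹ j) := Equiv.Perm.sameCycle_symm_apply_right.mpr h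
      simp [h, h2]
    · simp [h]

theorem cycleAt_mem {s : Equiv.Perm ℕ} (hs : s ∈ SInf) (i : ℕ) : cycleAt s i ∈ SInf := by
  rw [mem_SInf] at hs ⊢
  refine Set.Finite.subset hs fun j hj => ?_
  simp only [Set.mem_setOf_eq] at hj ⊢
  intro h
  apply hj
  show (if s.SameCycle i j then s j else j) = j
  split_ifs with hc
  · exact h
  · rfl

/-- The generalized cycle of `g = sγ` corresponding to the orbit of `i` under `s`. -/
def genCycle {Γ : Type*} [Group Γ] (g : WG Γ) (i : ℕ) : WG Γ :=
  permW ⟨cycleAt (g : W Γ).right i, cycleAt_mem g.2.1 i⟩ *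
  seqW ⟨fun k => if ((g : W Γ).right).SameCycle i k then (g : W Γ).left ((g : W Γ).right k)
      else 1, by
    rw [mem_GammaE]
    refine Set.Finite.subset (Set.Finite.preimage ((g : W Γ).right.injective.injOn) g.2.2)
      fun k hk => ?_
    simp only [Set.mem_setOf_eq] at hk
    simp only [Set.mem_preimage, Set.mem_setOf_eq]
    by_cases hsc : ((g : W Γ).right).SameCycle i k
    · rw [if_pos hsc] at hk; exact hk
    · rw [if_neg hsc] at hk; exact absurd rfl hk⟩

/-- The von Neumann algebra `𝔄_j` generated by `O_j` and the `π(γ)` with `γ` supported at `j`. -/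
def Aj (π : WG Γ →* (H →L[ℂ] H)) (O : H →L[ℂ] H) (j : ℕ) : Set (H →L[ℂ] H) :=
  commutant (commutant
    ({O} ∪ {T | ∃ γ : GammaE Γ, (∀ i, i ≠ j → (γ : ℕ → Γ) i = 1) ∧ T = π (seqW γ)}))

/-!
Write the cycle as `s = τ₀ ⋯ τ_{m-2}` with `τ_l = (k_l k_{m-1})`. Since `τ_b` fixes `k_a` for
`a < b`, it commutes with `U_a ∈ 𝔄_{k_a}`, so
`π(s) U₀ ⋯ U_{m-1} = (τ₀U₀) ⋯ (τ_{m-2}U_{m-2}) U_{m-1}`.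
Each factor `τ_l U_l = (τ_l U_l τ_l) τ_l` is then replaced, from right to left, by
`(τ_l U_l τ_l) O_{k_{m-1}}`: inside the expectation the transposition `τ_l` may be traded for the
asymptotic transposition because all the other factors commute with `π((k_l j))` for large `j`,
and the vector state of `ξ` is invariant under conjugation by `π(𝔖∞)` on all of `π(G)''`.
That invariance comes from the cyclicity of `ξ`: centrality of `φ` makes `π(g)ξ ↦ π(g)π(s)ξ`
isometric, so it extends to an isometry in `π(G)'` sending `ξ` to `π(s)ξ`.
-/

section Group

variable {Γ : Type*} [Group Γ]

theorem permW_mul (s t : SInf) : (permW (s * t) : WG Γ) = permW s * permW t :=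
  Subtype.ext (map_mul SemidirectProduct.inr (s : Equiv.Perm ℕ) t)

def permHom : SInf →* WG Γ := MonoidHom.mk' permW permW_mul

theorem permHom_apply (s : SInf) : (permHom s : WG Γ) = permW s := rfl

def swapS (a b : ℕ) : SInf := ⟨Equiv.swap a b, swap_mem_SInf a b⟩

theorem swapW_eq_permHom (a b : ℕ) : (swapW a b : WG Γ) = permHom (swapS a b) := rfl

theorem swapS_mul_swapS (a b c d : ℕ) :
    swapS a b * swapS c d = swapS (Equiv.swap a b c) (Equiv.swap a b d) * swapS a b :=
  Subtype.ext (Equiv.mul_swap_eq_swap_mul _ c d)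

theorem swapW_comm (a b : ℕ) : (swapW a b : WG Γ) = swapW b a := by
  simp only [swapW_eq_permHom, swapS, Equiv.swap_comm]

theorem swapW_mul_self (a b : ℕ) : (swapW a b : WG Γ) * swapW a b = 1 := by
  rw [swapW_eq_permHom, ← map_mul, ← map_one permHom]
  exact congrArg permHom (Subtype.ext (Equiv.swap_mul_self a b))

theorem swapW_mul_swapW (a b c d : ℕ) :
    (swapW a b : WG Γ) * swapW c d =
      swapW (Equiv.swap a b c) (Equiv.swap a b d) * swapW a b := by
  rw [swapW_eq_permHom, swapW_eq_permHom, ← map_mul, swapS_mul_swapS, map_mul]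
  rfl

theorem swapW_mul_swapW_of_ne {a b c d : ℕ} (hca : c ≠ a) (hcb : c ≠ b) (hda : d ≠ a)
    (hdb : d ≠ b) : (swapW a b : WG Γ) * swapW c d = swapW c d * swapW a b := by
  rw [swapW_mul_swapW, Equiv.swap_apply_of_ne_of_ne hca hcb,
    Equiv.swap_apply_of_ne_of_ne hda hdb]

theorem swapW_mul_swapW_left {a b j : ℕ} (hja : j ≠ a) (hjb : j ≠ b) :
    (swapW a b : WG Γ) * swapW a j = swapW b j * swapW a b := by
  rw [swapW_mul_swapW, Equiv.swap_apply_left, Equiv.swap_apply_of_ne_of_ne hja hjb]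

theorem swapW_eq_conj {a b j : ℕ} (hab : a ≠ b) (hjb : j ≠ b) :
    (swapW b j : WG Γ) = swapW a j * swapW a b * swapW a j := by
  rw [swapW_mul_swapW, Equiv.swap_apply_left, Equiv.swap_apply_of_ne_of_ne hab.symm hjb.symm,
    mul_assoc, swapW_mul_self, mul_one, swapW_comm]

theorem comp_perm_mem_GammaE (γ : GammaE Γ) (σ : Equiv.Perm ℕ) :
    (γ : ℕ → Γ) ∘ σ ∈ GammaE Γ :=
  γ.2.preimage σ.injective.injOn

theorem swapW_mul_seqW_mul_swapW (a b : ℕ) (γ : GammaE Γ) :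
    (swapW a b : WG Γ) * seqW γ * swapW a b =
      seqW ⟨(γ : ℕ → Γ) ∘ Equiv.swap a b, comp_perm_mem_GammaE γ _⟩ := by
  apply Subtype.ext
  show SemidirectProduct.inr (Equiv.swap a b) * SemidirectProduct.inl (γ : ℕ → Γ) *
    SemidirectProduct.inr (Equiv.swap a b) = _
  nth_rewrite 2 [← Equiv.swap_inv]
  rw [← SemidirectProduct.inl_aut]
  rfl

theorem swapW_mul_seqW_of_eq_one {a b : ℕ} {γ : GammaE Γ} (ha : (γ : ℕ → Γ) a = 1)
    (hb : (γ : ℕ → Γ) b = 1) : (swapW a b : WG Γ) * seqW γ = seqW γ * swapW a b := by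
  have hγ : (⟨(γ : ℕ → Γ) ∘ Equiv.swap a b, comp_perm_mem_GammaE γ _⟩ : GammaE Γ) = γ := by
    refine Subtype.ext (funext fun i => ?_)
    simp only [Function.comp_apply, Equiv.swap_apply_def]
    split_ifs with h₁ h₂
    · rw [h₁, ha, hb]
    · rw [h₂, ha, hb]
    · rfl
  calc (swapW a b : WG Γ) * seqW γ = swapW a b * seqW γ * swapW a b * swapW a b := by
        rw [mul_assoc _ (swapW a b), swapW_mul_self, mul_one]
    _ = seqW γ * swapW a b := by rw [swapW_mul_seqW_mul_swapW, hγ]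

end Group

section Cycle

open List Equiv

theorem formPerm_cons_cons_eq_mul_swap {α : Type*} [DecidableEq α] {n a : α} {l : List α}
    (h : (n :: a :: l).Nodup) : formPerm (n :: a :: l) = formPerm (n :: l) * swap n a := by
  have hrot : formPerm (n :: a :: l) = formPerm (l ++ [n, a]) :=
    formPerm_eq_of_isRotated h (isRotated_append (l := [n, a]))
  have hrot' : formPerm (n :: l) = formPerm (l ++ [n]) :=
    formPerm_eq_of_isRotated (h.sublist (by simp)) (isRotated_append (l := [n]))
  rw [hrot, formPerm_append_pair, hrot']

theorem prod_map_swap_eq_formPerm {α : Type*} [DecidableEq α] (n : α) (t : List α)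
    (h : (n :: t).Nodup) : (t.map fun a => swap a n).prod = formPerm (n :: t.reverse) := by
  induction t using List.reverseRecOn with
  | nil => rfl
  | append_singleton t a ih =>
    have h' : (n :: a :: t.reverse).Nodup := by
      refine (List.Perm.cons n ?_).nodup_iff.mp h
      simpa using (List.reverse_perm (t ++ [a])).symm
    rw [map_append, prod_append, ih (h.sublist (by simp)), reverse_append, reverse_singleton,
      singleton_append, formPerm_cons_cons_eq_mul_swap h', map_singleton, prod_singleton,
      Equiv.swap_comm]

theorem cycle_eq_prod_swap {m : ℕ} (hm : 0 < m) {k : ℕ → ℕ}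
    (hinj : ∀ a < m, ∀ b < m, k a = k b → a = b) {s : Perm ℕ}
    (hcyc : ∀ l, l + 1 < m → s (k (l + 1)) = k l) (hcyc0 : s (k 0) = k (m - 1))
    (hfix : ∀ i, (∀ l < m, k l ≠ i) → s i = i) :
    s = ((List.range (m - 1)).map fun l => swap (k l) (k (m - 1))).prod := by
  set L := (List.range m).map k with hLdef
  have hnd : L.Nodup :=
    nodup_range.map_on fun a ha b hb => hinj a (mem_range.1 ha) b (mem_range.1 hb)
  have hinv : s * formPerm L = 1 := by
    ext x
    rw [Perm.mul_apply, Perm.one_apply]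
    by_cases hx : x ∈ L
    · obtain ⟨i, hi, rfl⟩ := List.mem_iff_getElem.1 hx
      rw [formPerm_apply_getElem _ hnd]
      simp only [L, getElem_map, getElem_range, length_map, length_range]
      rcases Nat.lt_or_ge (i + 1) m with h | h
      · rw [Nat.mod_eq_of_lt h, hcyc i h]
      · simp only [L, length_map, length_range] at hi
        rw [show i + 1 = m by omega, Nat.mod_self, hcyc0, show i = m - 1 by omega]
    · rw [formPerm_apply_of_notMem hx, hfix x]
      rintro l hl rfl
      exact hx (mem_map_of_mem (mem_range.2 hl))
  have hL : L = (List.range (m - 1)).map k ++ [k (m - 1)] := by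
    conv_lhs => rw [hLdef, ← Nat.sub_add_cancel hm]
    rw [range_succ, map_append, map_singleton]
  have hrev : L.reverse = k (m - 1) :: ((List.range (m - 1)).map k).reverse := by
    rw [hL, reverse_append, reverse_singleton, singleton_append]
  rw [eq_inv_of_mul_eq_one_left hinv, ← formPerm_reverse, hrev,
    ← prod_map_swap_eq_formPerm _ _ ((perm_append_singleton _ _).nodup_iff.mp (hL ▸ hnd)),
    List.map_map]
  rfl

theorem permW_eq_prod_swapW {Γ : Type*} [Group Γ] {m : ℕ} (hm : 0 < m) {k : ℕ → ℕ}
    (hinj : ∀ a < m, ∀ b < m, k a = k b → a = b) {s : SInf}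
    (hcyc : ∀ l, l + 1 < m → (s : Perm ℕ) (k (l + 1)) = k l)
    (hcyc0 : (s : Perm ℕ) (k 0) = k (m - 1)) (hfix : ∀ i, (∀ l < m, k l ≠ i) → (s : Perm ℕ) i = i) :
    (permW s : WG Γ) = ((List.range (m - 1)).map fun l => swapW (k l) (k (m - 1))).prod := by
  have hs : s = ((List.range (m - 1)).map fun l => swapS (k l) (k (m - 1))).prod := by
    refine Subtype.ext ?_
    rw [SubmonoidClass.coe_list_prod, List.map_map]
    exact cycle_eq_prod_swap hm hinj hcyc hcyc0 hfix
  rw [← permHom_apply, hs, map_list_prod, List.map_map]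
  rfl

end Cycle

section Involution

variable {M : Type*} [Monoid M] {τ : M}

theorem conj_conj_of_mul_self_eq_one (hτ : τ * τ = 1) (X : M) : τ * (τ * X * τ) * τ = X := by
  simp only [← mul_assoc, hτ, one_mul]
  rw [mul_assoc, hτ, mul_one]

theorem Commute.conj_of_mul_self_eq_one (hτ : τ * τ = 1) {X Y : M} (h : Commute X Y) :
    Commute (τ * X * τ) (τ * Y * τ) := by
  have hconj : ∀ A B : M, τ * A * τ * (τ * B * τ) = τ * (A * B) * τ := fun A B => by
    simp only [← mul_assoc]
    rw [mul_assoc (τ * A) τ τ, hτ, mul_one]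
  rw [Commute, SemiconjBy, hconj, hconj, h.eq]

theorem conj_mem_centralizer_centralizer (hτ : τ * τ = 1) {S T : Set M}
    (hST : ∀ A ∈ S, τ * A * τ ∈ T) {V : M} (hV : V ∈ Set.centralizer (Set.centralizer S)) :
    τ * V * τ ∈ Set.centralizer (Set.centralizer T) := by
  intro X hX
  have hX' : τ * X * τ ∈ Set.centralizer S := fun A hA => by
    have h := Commute.conj_of_mul_self_eq_one hτ (hX _ (hST A hA))
    rwa [conj_conj_of_mul_self_eq_one hτ] at h
  have h := Commute.conj_of_mul_self_eq_one hτ (hV _ hX')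
  rwa [conj_conj_of_mul_self_eq_one hτ] at h

end Involution

section ListProd

variable {M : Type*} [Monoid M]

theorem prod_range_mul_prod_range_of_commute {f g : ℕ → M} {r : ℕ}
    (h : ∀ a b, a < b → b < r → Commute (g a) (f b)) :
    ((List.range r).map f).prod * ((List.range r).map g).prod =
      ((List.range r).map fun l => f l * g l).prod := by
  induction r with
  | zero => simp
  | succ r ih =>
    have hr : Commute (f r) ((List.range r).map g).prod := Commute.list_prod_right _ _ <| by
      simpa using fun a ha => (h a r ha (Nat.lt_succ_self r)).symm
    rw [List.prod_range_succ, List.prod_range_succ, List.prod_range_succ,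
      ← ih fun a b hab hbr => h a b hab (Nat.lt_succ_of_lt hbr), mul_assoc, ← mul_assoc (f r),
      hr.eq]
    simp only [mul_assoc]

theorem apply_prod_range_mul_eq_of_replace {β : Type*} (F : M → β) {A W : ℕ → M}
    {S : ℕ → Submonoid M} {r : ℕ} (hW : ∀ i l, i < l → l < r → W l ∈ S i)
    (hstep : ∀ i < r, ∀ Q ∈ S i,
      F (((List.range i).map A).prod * A i * Q) = F (((List.range i).map A).prod * W i * Q))
    {R : M} (hR : ∀ i < r, R ∈ S i) :
    F (((List.range r).map A).prod * R) = F (((List.range r).map W).prod * R) := by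
  induction r generalizing R with
  | zero => rfl
  | succ r ih =>
    rw [List.prod_range_succ, List.prod_range_succ,
      hstep r r.lt_succ_self R (hR r r.lt_succ_self), mul_assoc, mul_assoc]
    exact ih (fun i l hil hlr => hW i l hil (Nat.lt_succ_of_lt hlr))
      (fun i hi => hstep i (Nat.lt_succ_of_lt hi))
      (fun i hi => mul_mem (hW i r hi r.lt_succ_self) (hR i (Nat.lt_succ_of_lt hi)))

end ListProd

section Isometry

variable {H : Type*} [NormedAddCommGroup H] [InnerProductSpace ℂ H] [CompleteSpace H]
  {G : Type*} [Group G] {π : G →* (H →L[ℂ] H)}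

theorem adjoint_eq_map_inv (hu : ∀ g, π g ∈ unitary (H →L[ℂ] H)) (g : G) :
    ContinuousLinearMap.adjoint (π g) = π g⁻¹ := by
  rw [← ContinuousLinearMap.star_eq_adjoint, ← mul_one (star (π g)), ← map_one π,
    ← mul_inv_cancel g, map_mul, ← mul_assoc, Unitary.star_mul_self_of_mem (hu g), one_mul]

theorem inner_map_apply_left (hu : ∀ g, π g ∈ unitary (H →L[ℂ] H)) (g : G) (x y : H) :
    ⟪π g x, y⟫ = ⟪x, π g⁻¹ y⟫ := by
  rw [← adjoint_eq_map_inv hu, ContinuousLinearMap.adjoint_inner_right]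

theorem exists_isometry_mem_centralizer (hu : ∀ g, π g ∈ unitary (H →L[ℂ] H)) {ξ η : H}
    (hξ : Dense (Submodule.span ℂ (Set.range fun g => π g ξ) : Set H))
    (hη : ∀ g, ⟪η, π g η⟫ = ⟪ξ, π g ξ⟫) :
    ∃ V ∈ Set.centralizer (Set.range π), V ξ = η ∧ ∀ x y, ⟪V x, V y⟫ = ⟪x, y⟫ := by
  classical
  let e : (G →₀ ℂ) →ₗ[ℂ] H := Finsupp.linearCombination ℂ fun g => π g ξ
  let f : (G →₀ ℂ) →ₗ[ℂ] H := Finsupp.linearCombination ℂ fun g => π g η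
  have he : ∀ g, e (Finsupp.single g 1) = π g ξ := fun g => by simp [e]
  have hf : ∀ g, f (Finsupp.single g 1) = π g η := fun g => by simp [f]
  have hgram : ∀ c d, ⟪f c, f d⟫ = ⟪e c, e d⟫ := by
    intro c d
    simp only [e, f, Finsupp.linearCombination_apply, Finsupp.sum, sum_inner, inner_sum,
      inner_smul_left, inner_smul_right, inner_map_apply_left hu, ← mul_apply_eq_comp,
      ← map_mul, hη]
  have hdense : DenseRange e := by
    rw [DenseRange, ← LinearMap.coe_range, Finsupp.range_linearCombination]
    exact hξ
  have hbound : ∀ c, ‖f c‖ ≤ 1 * ‖e c‖ := fun c => by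
    rw [one_mul, @norm_eq_sqrt_re_inner ℂ, @norm_eq_sqrt_re_inner ℂ, hgram]
  let V := f.extendOfNorm e
  have hVe : ∀ c, V (e c) = f c := LinearMap.extendOfNorm_eq hdense ⟨1, hbound⟩
  have hV : ∀ g, V (π g ξ) = π g η := fun g => by rw [← he, hVe, hf]
  refine ⟨V, ?_, ?_, ?_⟩
  · rintro _ ⟨g, rfl⟩
    refine ContinuousLinearMap.ext_on hξ ?_
    rintro _ ⟨h, rfl⟩
    show (π g * V) (π h ξ) = (V * π g) (π h ξ)
    rw [mul_apply_eq_comp, mul_apply_eq_comp, hV, ← mul_apply_eq_comp (π g) (π h) ξ, ← map_mul,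
      hV, map_mul, mul_apply_eq_comp]
  · simpa using hV 1
  · intro x y
    refine hdense.induction_on₂ (p := fun x y => ⟪V x, V y⟫ = ⟪x, y⟫) ?_ ?_ x y
    · exact isClosed_eq (by fun_prop) (by fun_prop)
    · intro c d
      rw [hVe, hVe, hgram]

theorem inner_apply_eq_of_mem_centralizer_centralizer (hu : ∀ g, π g ∈ unitary (H →L[ℂ] H))
    {ξ η : H} (hξ : Dense (Submodule.span ℂ (Set.range fun g => π g ξ) : Set H))
    (hη : ∀ g, ⟪η, π g η⟫ = ⟪ξ, π g ξ⟫) {E : H →L[ℂ] H}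
    (hE : E ∈ Set.centralizer (Set.centralizer (Set.range π))) : ⟪η, E η⟫ = ⟪ξ, E ξ⟫ := by
  obtain ⟨V, hV, rfl, hiso⟩ := exists_isometry_mem_centralizer hu hξ hη
  rw [← mul_apply_eq_comp E V, ← hE V hV, mul_apply_eq_comp, hiso]

end Isometry

section Representation

variable {Γ : Type*} [Group Γ] {H : Type*} [NormedAddCommGroup H] [InnerProductSpace ℂ H]
  {φ : WG Γ → ℂ} {π : WG Γ →* (H →L[ℂ] H)} {ξ : H}

theorem commutant_eq_centralizer (S : Set (H →L[ℂ] H)) : commutant S = Set.centralizer S := by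
  ext T
  exact forall₂_congr fun _ _ => eq_comm

theorem vN_eq_centralizer (π : WG Γ →* (H →L[ℂ] H)) :
    vN π = Set.centralizer (Set.centralizer (Set.range π)) := by
  rw [vN, commutant_eq_centralizer, commutant_eq_centralizer]
  rfl

theorem map_mem_vN (g : WG Γ) : π g ∈ vN π := by
  rw [vN_eq_centralizer]
  exact Set.subset_centralizer_centralizer ⟨g, rfl⟩

theorem mul_mem_vN {X Y : H →L[ℂ] H} (hX : X ∈ vN π) (hY : Y ∈ vN π) : X * Y ∈ vN π := by
  rw [vN_eq_centralizer] at *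
  exact Set.mul_mem_centralizer hX hY

def IsAsymptoticTransposition (π : WG Γ →* (H →L[ℂ] H)) (O : ℕ → H →L[ℂ] H) : Prop :=
  ∀ (i : ℕ) (x y : H), Tendsto (fun j => ⟪y, π (swapW i j) x⟫) atTop (𝓝 ⟪y, O i x⟫)

def tailCommutant (π : WG Γ →* (H →L[ℂ] H)) (a : ℕ) : Submonoid (H →L[ℂ] H) where
  carrier := {X | X ∈ vN π ∧ ∀ᶠ j in atTop, Commute (π (swapW a j)) X}
  mul_mem' hX hY := ⟨mul_mem_vN hX.1 hY.1, (hX.2.and hY.2).mono fun _ h => h.1.mul_right h.2⟩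
  one_mem' := ⟨map_one π ▸ map_mem_vN 1, Eventually.of_forall fun _ => Commute.one_right _⟩

theorem swapW_mem_tailCommutant {a c d : ℕ} (hca : c ≠ a) (hda : d ≠ a) :
    π (swapW c d) ∈ tailCommutant π a := by
  refine ⟨map_mem_vN _, ?_⟩
  filter_upwards [eventually_ne_atTop c, eventually_ne_atTop d] with j hjc hjd
  exact Commute.map (swapW_mul_swapW_of_ne hca hjc.symm hda hjd.symm) π

variable [CompleteSpace H] {O : ℕ → H →L[ℂ] H}

theorem inner_permW_apply_eq (hcentral : IsSCentral φ)
    (hGNS : IsGNS φ π ξ) (s : SInf) {E : H →L[ℂ] H} (hE : E ∈ vN π) :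
    ⟪π (permW s) ξ, E (π (permW s) ξ)⟫ = ⟪ξ, E ξ⟫ := by
  rw [vN_eq_centralizer] at hE
  refine inner_apply_eq_of_mem_centralizer_centralizer hGNS.unitary hGNS.cyclic (fun g => ?_) hE
  have hinv : (permW s)⁻¹ = (permW s⁻¹ : WG Γ) := (map_inv (permHom (Γ := Γ)) s).symm
  rw [inner_map_apply_left hGNS.unitary, ← mul_apply_eq_comp, ← mul_apply_eq_comp, ← map_mul,
    ← map_mul, ← hGNS.inner_eq, ← hGNS.inner_eq, hinv, ← hcentral s⁻¹ g, ← hinv, inv_inv]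

namespace IsAsymptoticTransposition

theorem tendsto_inner_mul (hO : IsAsymptoticTransposition π O) (X Y : H →L[ℂ] H) (i : ℕ)
    (x y : H) :
    Tendsto (fun j => ⟪y, (X * π (swapW i j) * Y) x⟫) atTop (𝓝 ⟪y, (X * O i * Y) x⟫) := by
  simpa only [mul_apply_eq_comp, ContinuousLinearMap.adjoint_inner_left]
    using hO i (Y x) (ContinuousLinearMap.adjoint X y)

theorem mul_eq_mul (hO : IsAsymptoticTransposition π O) {A B : H →L[ℂ] H} {i i' : ℕ}
    (h : ∀ᶠ j in atTop, A * π (swapW i j) = π (swapW i' j) * B) : A * O i = O i' * B := by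
  ext x
  refine ext_inner_left ℂ fun y => tendsto_nhds_unique ?_ (hO.tendsto_inner_mul 1 B i' x y)
  simpa only [one_mul, mul_one] using (hO.tendsto_inner_mul A 1 i x y).congr'
    (h.mono fun j hj => by simp only [mul_one, hj])

theorem mem_vN (hO : IsAsymptoticTransposition π O) (i : ℕ) : O i ∈ vN π := by
  rw [vN_eq_centralizer]
  rintro T hT
  exact hO.mul_eq_mul (Eventually.of_forall fun j => (hT _ ⟨_, rfl⟩).symm)

theorem swapW_mul_of_ne (hO : IsAsymptoticTransposition π O) {a b i : ℕ} (hai : a ≠ i)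
    (hbi : b ≠ i) : π (swapW a b) * O i = O i * π (swapW a b) := by
  refine hO.mul_eq_mul ?_
  filter_upwards [eventually_ne_atTop a, eventually_ne_atTop b] with j hja hjb
  rw [← map_mul, ← map_mul, swapW_mul_swapW_of_ne hai.symm hbi.symm hja hjb]

theorem swapW_mul_left (hO : IsAsymptoticTransposition π O) (a b : ℕ) :
    π (swapW a b) * O a = O b * π (swapW a b) := by
  refine hO.mul_eq_mul ?_
  filter_upwards [eventually_ne_atTop a, eventually_ne_atTop b] with j hja hjb
  rw [← map_mul, ← map_mul, swapW_mul_swapW_left hja hjb]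

end IsAsymptoticTransposition

theorem Aj_subset_vN (hO : IsAsymptoticTransposition π O) (j : ℕ) : Aj π (O j) j ⊆ vN π := by
  rw [Aj, vN_eq_centralizer, commutant_eq_centralizer, commutant_eq_centralizer]
  refine Set.centralizer_subset ?_
  rw [← Set.centralizer_centralizer_centralizer (Set.range π)]
  refine Set.centralizer_subset ?_
  rintro _ (rfl | ⟨γ, -, rfl⟩)
  · exact vN_eq_centralizer π ▸ hO.mem_vN j
  · exact Set.subset_centralizer_centralizer ⟨_, rfl⟩

theorem commute_of_mem_Aj (hO : IsAsymptoticTransposition π O) {a b j : ℕ} (haj : a ≠ j)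
    (hbj : b ≠ j) {V : H →L[ℂ] H} (hV : V ∈ Aj π (O j) j) : Commute (π (swapW a b)) V := by
  rw [Aj, commutant_eq_centralizer, commutant_eq_centralizer] at hV
  refine hV _ ?_
  rintro _ (rfl | ⟨γ, hγ, rfl⟩)
  · exact (hO.swapW_mul_of_ne haj hbj).symm
  · rw [← map_mul, ← map_mul, swapW_mul_seqW_of_eq_one (hγ a haj) (hγ b hbj)]

theorem conj_mem_Aj (hO : IsAsymptoticTransposition π O) {a b : ℕ} {V : H →L[ℂ] H}
    (hV : V ∈ Aj π (O a) a) : π (swapW a b) * V * π (swapW a b) ∈ Aj π (O b) b := by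
  rw [Aj, commutant_eq_centralizer, commutant_eq_centralizer] at hV ⊢
  refine conj_mem_centralizer_centralizer (by rw [← map_mul, swapW_mul_self, map_one]) ?_ hV
  rintro _ (rfl | ⟨γ, hγ, rfl⟩)
  · left
    rw [hO.swapW_mul_left, mul_assoc, ← map_mul, swapW_mul_self, map_one, mul_one]
    rfl
  · right
    refine ⟨⟨(γ : ℕ → Γ) ∘ Equiv.swap a b, comp_perm_mem_GammaE γ _⟩, fun i hib => hγ _ ?_,
      by rw [← map_mul, ← map_mul, swapW_mul_seqW_mul_swapW]⟩
    rwa [Ne, Equiv.swap_apply_eq_iff, Equiv.swap_apply_left]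

theorem IsAsymptoticTransposition.mem_tailCommutant (hO : IsAsymptoticTransposition π O)
    {a c : ℕ} (hca : c ≠ a) : O c ∈ tailCommutant π a := by
  refine ⟨hO.mem_vN c, ?_⟩
  filter_upwards [eventually_ne_atTop c] with j hjc
  exact hO.swapW_mul_of_ne hca.symm hjc

theorem Aj_subset_tailCommutant (hO : IsAsymptoticTransposition π O) {a c : ℕ} (hca : c ≠ a) :
    Aj π (O c) c ⊆ tailCommutant π a := fun V hV => by
  refine ⟨Aj_subset_vN hO c hV, ?_⟩
  filter_upwards [eventually_ne_atTop c] with j hjc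
  exact commute_of_mem_Aj hO hca.symm hjc hV

/-- The weak limit of `X π((b j)) Y` is `X O_b Y`; when `X` and `Y` commute with `σ = π((a j))`,
`X π((b j)) Y = σ (X π((a b)) Y) σ`, whose expectation does not depend on `j` by centrality. -/
theorem inner_mul_O_mul (hcentral : IsSCentral φ) (hGNS : IsGNS φ π ξ)
    (hO : IsAsymptoticTransposition π O) {a b : ℕ} (hab : a ≠ b) {X Y : H →L[ℂ] H}
    (hX : X ∈ tailCommutant π a) (hY : Y ∈ tailCommutant π a) :
    ⟪ξ, (X * O b * Y) ξ⟫ = ⟪ξ, (X * π (swapW a b) * Y) ξ⟫ := by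
  refine tendsto_nhds_unique (hO.tendsto_inner_mul X Y b ξ ξ) (tendsto_const_nhds.congr' ?_)
  filter_upwards [hX.2, hY.2, eventually_ne_atTop b] with j hXj hYj hjb
  have hconj : X * π (swapW b j) * Y =
      π (swapW a j) * (X * π (swapW a b) * Y) * π (swapW a j) := by
    rw [swapW_eq_conj hab hjb, map_mul, map_mul]
    calc X * (π (swapW a j) * π (swapW a b) * π (swapW a j)) * Y
        = X * π (swapW a j) * π (swapW a b) * (π (swapW a j) * Y) := by simp only [mul_assoc]
      _ = π (swapW a j) * (X * π (swapW a b) * Y) * π (swapW a j) := by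
          rw [← hXj.eq, hYj.eq]
          simp only [mul_assoc]
  have hσ : (swapW a j : WG Γ)⁻¹ = swapW a j := inv_eq_of_mul_eq_one_right (swapW_mul_self a j)
  have hZ : X * π (swapW a b) * Y ∈ vN π := mul_mem_vN (mul_mem_vN hX.1 (map_mem_vN _)) hY.1
  rw [hconj, mul_apply_eq_comp _ (π (swapW a j)), mul_apply_eq_comp (π (swapW a j)), ← hσ,
    ← inner_map_apply_left hGNS.unitary, hσ]
  exact (inner_permW_apply_eq hcentral hGNS (swapS a j) hZ).symm

theorem inner_mul_swapW_mul (hcentral : IsSCentral φ) (hGNS : IsGNS φ π ξ)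
    (hO : IsAsymptoticTransposition π O) {a b : ℕ} (hab : a ≠ b) {V P Q : H →L[ℂ] H}
    (hV : V ∈ Aj π (O a) a) (hP : P ∈ tailCommutant π a) (hQ : Q ∈ tailCommutant π a) :
    ⟪ξ, (P * (π (swapW a b) * V) * Q) ξ⟫ =
      ⟪ξ, (P * (π (swapW a b) * V * π (swapW a b) * O b) * Q) ξ⟫ := by
  set τ := π (swapW a b)
  have hτ : τ * τ = 1 := by rw [← map_mul, swapW_mul_self, map_one]
  have hW : τ * V * τ ∈ tailCommutant π a :=
    Aj_subset_tailCommutant hO hab.symm (conj_mem_Aj hO hV)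
  have h := inner_mul_O_mul hcentral hGNS hO hab (mul_mem hP hW) hQ
  rw [show P * (τ * V * τ) * τ * Q = P * (τ * V) * Q by simp only [mul_assoc, hτ, mul_one]] at h
  rw [← h]
  simp only [mul_assoc]

end Representation

theorem statement_13_general {Γ : Type*} [Group Γ] {H : Type*} [NormedAddCommGroup H]
    [InnerProductSpace ℂ H] [CompleteSpace H]
    (φ : WG Γ → ℂ) (hcentral : IsSCentral φ)
    (π : WG Γ →* (H →L[ℂ] H)) (ξ : H) (hGNS : IsGNS φ π ξ)
    (O : ℕ → (H →L[ℂ] H))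
    (hO : ∀ (i : ℕ) (x y : H),
      Tendsto (fun j => ⟪y, π (swapW i j) x⟫) atTop (𝓝 ⟪y, O i x⟫))
    (m : ℕ) (hm : 2 ≤ m) (k : ℕ → ℕ)
    (hinj : ∀ a < m, ∀ b < m, k a = k b → a = b)
    (s : SInf)
    (hcyc : ∀ l, l + 1 < m → (s : Equiv.Perm ℕ) (k (l + 1)) = k l)
    (hcyc0 : (s : Equiv.Perm ℕ) (k 0) = k (m - 1))
    (hfix : ∀ i : ℕ, (∀ l < m, k l ≠ i) → (s : Equiv.Perm ℕ) i = i)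
    (V : ℕ → H →L[ℂ] H) (hV : ∀ l < m, V l ∈ Aj π (O (k l)) (k l)) :
    ⟪ξ, π (permW s) (((List.range m).map V).prod ξ)⟫ =
      ⟪ξ, (((List.range (m - 1)).map fun l =>
            π (swapW (k l) (k (m - 1))) * V l * π (swapW (k l) (k (m - 1))) *
              O (k (m - 1))).prod * V (m - 1)) ξ⟫ := by
  have hO' : IsAsymptoticTransposition π O := hO
  have hk : ∀ a < m, ∀ b < m, a ≠ b → k a ≠ k b := fun a ha b hb hab h => hab (hinj a ha b hb h)
  have hlast : ∀ i < m - 1, k (m - 1) ≠ k i := fun i hi => hk _ (by omega) i (by omega) (by omega)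
  have hτV : ∀ i < m - 1, ∀ l < m, l ≠ i →
      π (swapW (k l) (k (m - 1))) * V l ∈ tailCommutant π (k i) := fun i hi l hl hli =>
    mul_mem (swapW_mem_tailCommutant (hk l hl i (by omega) hli) (hlast i hi))
      (Aj_subset_tailCommutant hO' (hk l hl i (by omega) hli) (hV l hl))
  have hVs : ((List.range m).map V).prod = ((List.range (m - 1)).map V).prod * V (m - 1) := by
    conv_lhs => rw [← Nat.sub_add_cancel (by omega : 1 ≤ m)]
    exact List.prod_range_succ _ _
  rw [← mul_apply_eq_comp, permW_eq_prod_swapW (by omega) hinj hcyc hcyc0 hfix, map_list_prod,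
    List.map_map, Function.comp_def, hVs, ← mul_assoc,
    prod_range_mul_prod_range_of_commute fun a b hab hbm =>
      (commute_of_mem_Aj hO' (hk b (by omega) a (by omega) (by omega)) (hlast a (by omega))
        (hV a (by omega))).symm]
  refine apply_prod_range_mul_eq_of_replace (fun X => ⟪ξ, X ξ⟫)
    (S := fun i => tailCommutant π (k i)) (fun i l hil hlm => ?_) (fun i hi Q hQ => ?_)
    (fun i hi => Aj_subset_tailCommutant hO' (hlast i hi) (hV _ (by omega)))
  · exact mul_mem (mul_mem (hτV i (by omega) l (by omega) (by omega))
      (swapW_mem_tailCommutant (hk l (by omega) i (by omega) (by omega)) (hlast i (by omega))))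
      (hO'.mem_tailCommutant (hlast i (by omega)))
  · refine inner_mul_swapW_mul hcentral hGNS hO' (hlast i hi).symm (hV i (by omega))
      (Submonoid.list_prod_mem _ ?_) hQ
    simp only [List.mem_map, List.mem_range]
    rintro _ ⟨l, hl, rfl⟩
    exact hτV i hi l (by omega) (by omega)

theorem statement_13 {Γ : Type*} [Group Γ] {H : Type*} [NormedAddCommGroup H]
    [InnerProductSpace ℂ H] [CompleteSpace H]
    (φ : WG Γ → ℂ) (hstate : IsState φ) (hcentral : IsSCentral φ)
    (π : WG Γ →* (H →L[ℂ] H)) (ξ : H) (hGNS : IsGNS φ π ξ)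
    (hfact : IsFactorial π)
    (O : ℕ → (H →L[ℂ] H)) (hOsa : ∀ i, IsSelfAdjoint (O i))
    (hO : ∀ (i : ℕ) (x y : H),
      Tendsto (fun j => ⟪y, π (swapW i j) x⟫) atTop (𝓝 ⟪y, O i x⟫))
    (m : ℕ) (hm : 2 ≤ m) (k : ℕ → ℕ)
    (hinj : ∀ a < m, ∀ b < m, k a = k b → a = b)
    (s : SInf)
    (hcyc : ∀ l, l + 1 < m → (s : Equiv.Perm ℕ) (k (l + 1)) = k l)
    (hcyc0 : (s : Equiv.Perm ℕ) (k 0) = k (m - 1))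
    (hfix : ∀ i : ℕ, (∀ l < m, k l ≠ i) → (s : Equiv.Perm ℕ) i = i)
    (V : ℕ → H →L[ℂ] H) (hV : ∀ l < m, V l ∈ Aj π (O (k l)) (k l)) :
    ⟪ξ, π (permW s) (((List.range m).map V).prod ξ)⟫ =
      ⟪ξ, (((List.range (m - 1)).map fun l =>
            π (swapW (k l) (k (m - 1))) * V l * π (swapW (k l) (k (m - 1))) *
              O (k (m - 1))).prod * V (m - 1)) ξ⟫ :=
  statement_13_general φ hcentral π ξ hGNS O hO m hm k hinj s hcyc hcyc0 hfix V hV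

end DN
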